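/- Consider the semidefinite program: maximize (1/2)⟨σ₀, P₀⟩ + (1/2)⟨σ₁, P₁⟩ over density matrices σ₀ on G ⊗ B = ℂ² ⊗ ℂ³ and σ₁ on Y ⊗ B = ℂ² ⊗ ℂ³, subject to Tr_G(σ₀) = Tr_Y(σ₁), where P₀ = |0⟩⟨0|_G ⊗ (|0⟩⟨0|+|1⟩⟨1|)_B + |1⟩⟨1|_G ⊗ |2⟩⟨2|_B and P₁ = Σ_{y∈{0,1}} |y⟩⟨y|_Y ⊗ |φ_y⟩⟨φ_y|_B. Its optimal value v satisfies 0.933 ≤ v ≤ 0.9331. (This is Alice's optimal cheating probability in the stochastic-switch Rabin oblivious transfer protocol, variant 1: her best average probability of correctly guessing whether Bob received the bit or ⊥ when Bob measures, and of passing Bob's verification test when he tests.) -/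

import Mathlib

/-! STATEMENT 12: Alice's optimal cheating probability in the stochastic-switch Rabin oblivious transfer protocol (variant 1) lies in [0.933, 0.9331]. -/

open Matrix
open scoped Matrix BigOperators ComplexOrder

noncomputable section

/-- Square matrices over ℂ indexed by `α`. -/
abbrev Mat (α : Type) : Type := Matrix α α ℂ

/-- A density matrix: positive semidefinite with unit trace. -/
def IsDensity {α : Type} [Fintype α] [DecidableEq α] (ρ : Mat α) : Prop :=
  ρ.PosSemidef ∧ ρ.trace = 1

/-- Hilbert–Schmidt inner product ⟨P, Q⟩ = Tr(P† Q). -/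
def hs {α : Type} [Fintype α] (P Q : Mat α) : ℂ := (Pᴴ * Q).trace

/-- Outer product |v⟩⟨v|. -/
def outer {α : Type} (v : α → ℂ) : Mat α := fun i j => v i * star (v j)

/-- Standard basis vector |i⟩. -/
def ket {α : Type} [DecidableEq α] (i : α) : α → ℂ := fun j => if j = i then 1 else 0

/-- The embedding of Fin 2 into Fin 3. -/
def f23 (y : Fin 2) : Fin 3 := ⟨y.val, by omega⟩

/-- |φ_y⟩ = (|yy⟩ + |22⟩)/√2 ∈ ℂ³ ⊗ ℂ³. -/
def phi (y : Fin 2) : Fin 3 × Fin 3 → ℂ :=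
  fun p => (ket (f23 y, f23 y) p + ket ((2 : Fin 3), (2 : Fin 3)) p) / (Real.sqrt 2 : ℂ)

/-- Partial trace over the first tensor factor. -/
def ptrA {α β : Type} [Fintype α] (ρ : Mat (α × β)) : Mat β :=
  fun b b' => ∑ a, ρ (a, b) (a, b')

/-- Single-qutrit |φ_y⟩ = (|y⟩ + |⊥⟩)/√2, with |⊥⟩ = |2⟩. -/
def phi1 (y : Fin 2) : Fin 3 → ℂ :=
  fun b => (ket (f23 y) b + ket (2 : Fin 3) b) / (Real.sqrt 2 : ℂ)

/-- P₀ = |0⟩⟨0|_G ⊗ (|0⟩⟨0|+|1⟩⟨1|)_B + |1⟩⟨1|_G ⊗ |2⟩⟨2|_B. -/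
def P0r : Mat (Fin 2 × Fin 3) := fun p q =>
  ket (0 : Fin 2) p.1 * star (ket (0 : Fin 2) q.1) *
    (ket (0 : Fin 3) p.2 * star (ket (0 : Fin 3) q.2)
      + ket (1 : Fin 3) p.2 * star (ket (1 : Fin 3) q.2))
  + ket (1 : Fin 2) p.1 * star (ket (1 : Fin 2) q.1) *
    (ket (2 : Fin 3) p.2 * star (ket (2 : Fin 3) q.2))

/-- P₁ = Σ_y |y⟩⟨y|_Y ⊗ |φ_y⟩⟨φ_y|_B. -/
def P1r : Mat (Fin 2 × Fin 3) := fun p q =>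
  ∑ y : Fin 2, ket y p.1 * star (ket y q.1) * (phi1 y p.2 * star (phi1 y q.2))

/-!
Both bounds come from an exact rational solution of the semidefinite program and of its dual.
Both `P₀` and `P₁` are classical–quantum, `P = ∑ₐ |a⟩⟨a| ⊗ Xₐ`. If `A ≥ Xₐ` for all blocks of
`P₀`, `B ≥ Xₐ` for all blocks of `P₁` and `A + B ≤ t·1`, then for a feasible pair with common
marginal `ρ = Tr_G σ₀ = Tr_Y σ₁` we get `⟨σ₀, P₀⟩ ≤ Tr(ρA)` and `⟨σ₁, P₁⟩ ≤ Tr(ρB)`, so the value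
is at most `Tr(ρ(A + B))/2 ≤ t/2` (weak duality). Rounding a numerical dual optimum to rationals
gives such `A`, `B` with `t/2 = 0.9331`, each semidefiniteness being certified by an exact `LDLᵀ`
factorization. A pair of classical–quantum states with rational rank-one blocks and equal
marginals attains at least `0.933`.
-/

open scoped Kronecker

section ClassicalQuantum

variable {R : Type*} [CommRing R] {α β : Type} [Fintype α] [DecidableEq α]

def cqOp (X : α → Matrix β β R) : Matrix (α × β) (α × β) R :=
  ∑ a, single a a 1 ⊗ₖ X a

theorem cqOp_apply (X : α → Matrix β β R) (p q : α × β) :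
    cqOp X p q = if p.1 = q.1 then X p.1 p.2 q.2 else 0 := by
  simp [cqOp, Matrix.sum_apply, kroneckerMap_apply, single_apply, ite_and]

theorem cqOp_sub (X Y : α → Matrix β β R) : cqOp X - cqOp Y = cqOp (X - Y) := by
  ext p q
  simp only [Matrix.sub_apply, cqOp_apply, Pi.sub_apply]
  split_ifs <;> simp

theorem cqOp_mul_cqOp [Fintype β] (X Y : α → Matrix β β R) :
    cqOp X * cqOp Y = cqOp (X * Y) := by
  ext p q
  simp only [mul_apply, cqOp_apply, mul_ite, ite_mul, zero_mul, mul_zero, Fintype.sum_prod_type,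
    Finset.sum_ite_irrel, Finset.sum_const_zero, Finset.sum_ite_eq', Finset.mem_univ, ↓reduceIte,
    Pi.mul_apply]
  split_ifs <;> simp_all

theorem trace_cqOp [Fintype β] (X : α → Matrix β β R) :
    (cqOp X).trace = ∑ a, (X a).trace := by
  simp [trace, cqOp_apply, Fintype.sum_prod_type]

theorem conjTranspose_cqOp [StarRing R] (X : α → Matrix β β R) :
    (cqOp X)ᴴ = cqOp fun a => (X a)ᴴ := by
  ext p q
  simp only [conjTranspose_apply, cqOp_apply]
  split_ifs <;> simp_all

omit [CommRing R] in
theorem posSemidef_cqOp {𝕜 : Type*} [RCLike 𝕜] [Fintype β] {X : α → Matrix β β 𝕜}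
    (hX : ∀ a, (X a).PosSemidef) : (cqOp X).PosSemidef :=
  posSemidef_sum _ fun a _ => by
    rw [← diagonal_single]
    refine (posSemidef_diagonal_iff.mpr fun i => ?_).kronecker (hX a)
    rw [Pi.single_apply]
    split_ifs <;> simp

end ClassicalQuantum

theorem Matrix.PosSemidef.trace_mul_nonneg {𝕜 n : Type*} [RCLike 𝕜] [Fintype n] [DecidableEq n]
    {P Q : Matrix n n 𝕜} (hP : P.PosSemidef) (hQ : Q.PosSemidef) : 0 ≤ (P * Q).trace := by
  open MatrixOrder in
  obtain ⟨B, rfl⟩ := CStarAlgebra.nonneg_iff_eq_star_mul_self.mp hP.nonneg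
  rw [star_eq_conjTranspose, Matrix.mul_assoc, trace_mul_comm]
  exact (hQ.mul_mul_conjTranspose_same B).trace_nonneg

section PartialTrace

variable {α β : Type} [Fintype α]

theorem ptrA_eq_sum_submatrix (σ : Mat (α × β)) :
    ptrA σ = ∑ a, σ.submatrix (Prod.mk a) (Prod.mk a) := by
  ext b b'
  simp [ptrA, Matrix.sum_apply]

theorem trace_ptrA [Fintype β] (σ : Mat (α × β)) : (ptrA σ).trace = σ.trace := by
  simp only [ptrA, trace, diag, Fintype.sum_prod_type]
  exact Finset.sum_comm

theorem Matrix.PosSemidef.ptrA [Fintype β] {σ : Mat (α × β)} (hσ : σ.PosSemidef) :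
    (ptrA σ).PosSemidef := by
  rw [ptrA_eq_sum_submatrix]
  exact posSemidef_sum _ fun a _ => hσ.submatrix _

theorem IsDensity.ptrA [Fintype β] [DecidableEq α] [DecidableEq β] {σ : Mat (α × β)}
    (hσ : IsDensity σ) : IsDensity (ptrA σ) :=
  ⟨Matrix.PosSemidef.ptrA hσ.1, (trace_ptrA σ).trans hσ.2⟩

theorem ptrA_cqOp [DecidableEq α] (X : α → Mat β) : ptrA (cqOp X) = ∑ a, X a := by
  ext b b'
  simp [ptrA, cqOp_apply, Matrix.sum_apply]

theorem trace_mul_cqOp_const [Fintype β] [DecidableEq α] (σ : Mat (α × β)) (A : Mat β) :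
    (σ * cqOp fun _ => A).trace = (ptrA σ * A).trace := by
  simp only [trace, diag_apply, mul_apply, cqOp_apply, mul_ite, mul_zero, Fintype.sum_prod_type,
    Finset.sum_ite_irrel, Finset.sum_const_zero, Finset.sum_ite_eq', Finset.mem_univ, ↓reduceIte,
    ptrA, Finset.sum_mul]
  exact Finset.sum_comm.trans (Finset.sum_congr rfl fun _ _ => Finset.sum_comm)

end PartialTrace

section HilbertSchmidt

variable {β : Type} [Fintype β]

theorem hs_eq_trace_mul {σ : Mat β} (hσ : σ.IsHermitian) (P : Mat β) :
    hs σ P = (σ * P).trace := by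
  rw [hs, hσ.eq]

theorem hs_cqOp {α : Type} [Fintype α] [DecidableEq α] (X Y : α → Mat β) :
    hs (cqOp X) (cqOp Y) = ∑ a, hs (X a) (Y a) := by
  simp only [hs, conjTranspose_cqOp, cqOp_mul_cqOp, trace_cqOp, Pi.mul_apply]

end HilbertSchmidt

section Duality

variable {α α' β : Type} [Fintype α] [DecidableEq α] [Fintype α'] [DecidableEq α']
  [Fintype β] [DecidableEq β]

theorem trace_mul_cqOp_le {σ : Mat (α × β)} {X : α → Mat β} {A : Mat β}
    (hσ : σ.PosSemidef) (hA : ∀ a, (A - X a).PosSemidef) :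
    (σ * cqOp X).trace ≤ (ptrA σ * A).trace := by
  have hsub : (cqOp fun _ => A) - cqOp X = cqOp fun a => A - X a := cqOp_sub _ _
  have := hσ.trace_mul_nonneg (posSemidef_cqOp hA)
  rwa [← hsub, Matrix.mul_sub, trace_sub, trace_mul_cqOp_const, sub_nonneg] at this

theorem trace_mul_le_of_add_eq_smul_one {ρ A S : Mat β} {t : ℂ} (hρ : IsDensity ρ)
    (hS : S.PosSemidef) (h : A + S = t • 1) : (ρ * A).trace ≤ t := by
  have hρS := hρ.1.trace_mul_nonneg hS
  have hρAS : (ρ * A).trace + (ρ * S).trace = t := by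
    rw [← trace_add, ← Matrix.mul_add, h, Matrix.mul_smul, Matrix.mul_one, trace_smul, hρ.2,
      smul_eq_mul, mul_one]
  rw [← hρAS]
  exact le_add_of_nonneg_right hρS

theorem value_le_of_dual_feasible {X0 : α → Mat β} {X1 : α' → Mat β} {A B S : Mat β} {t : ℝ}
    (hA : ∀ a, (A - X0 a).PosSemidef) (hB : ∀ a, (B - X1 a).PosSemidef) (hS : S.PosSemidef)
    (hABS : A + B + S = (t : ℂ) • 1) {σ0 : Mat (α × β)} {σ1 : Mat (α' × β)}
    (h0 : IsDensity σ0) (h1 : IsDensity σ1) (hpt : ptrA σ0 = ptrA σ1) :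
    ((1/2 : ℂ) * hs σ0 (cqOp X0) + (1/2 : ℂ) * hs σ1 (cqOp X1)).re ≤ t / 2 := by
  have hle0 := (Complex.le_def.mp (trace_mul_cqOp_le h0.1 hA)).1
  have hle1 := (Complex.le_def.mp (trace_mul_cqOp_le h1.1 hB)).1
  rw [← hpt] at hle1
  have hρ := trace_mul_le_of_add_eq_smul_one (A := A + B) h0.ptrA hS hABS
  rw [Matrix.mul_add, trace_add] at hρ
  have hρ' := (Complex.le_def.mp hρ).1
  rw [Complex.add_re, Complex.ofReal_re] at hρ'
  rw [hs_eq_trace_mul h0.1.isHermitian, hs_eq_trace_mul h1.1.isHermitian]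
  simp only [Complex.add_re, Complex.mul_re]
  norm_num
  linarith

end Duality

section RationalMatrices

variable {n : Type} [Fintype n] [DecidableEq n]

def ofRat : Matrix n n ℚ →+* Mat n := (Rat.castHom ℂ).mapMatrix

theorem ofRat_apply (M : Matrix n n ℚ) (i j : n) : ofRat M i j = (M i j : ℂ) := rfl

theorem conjTranspose_ofRat (M : Matrix n n ℚ) : (ofRat M)ᴴ = ofRat Mᵀ := by
  ext i j
  simp [ofRat_apply]

theorem trace_ofRat (M : Matrix n n ℚ) : (ofRat M).trace = (M.trace : ℂ) :=
  (AddMonoidHom.map_trace (Rat.castHom ℂ) M).symm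

theorem hs_ofRat (M N : Matrix n n ℚ) : hs (ofRat M) (ofRat N) = ((Mᵀ * N).trace : ℂ) := by
  rw [hs, conjTranspose_ofRat, ← map_mul, trace_ofRat]

theorem posSemidef_ofRat_of_eq_ldl {M L : Matrix n n ℚ} {d : n → ℚ} (hd : ∀ i, 0 ≤ d i)
    (h : M = Lᵀ * diagonal d * L) : (ofRat M).PosSemidef := by
  have hdiag : ofRat (diagonal d) = diagonal fun i => (d i : ℂ) := by
    ext i j
    by_cases hij : i = j <;> simp [ofRat_apply, hij]
  rw [h, map_mul, map_mul, ← conjTranspose_ofRat, hdiag]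
  refine (posSemidef_diagonal_iff.mpr fun i => ?_).conjTranspose_mul_mul_same _
  exact Complex.zero_le_real.mpr (Rat.cast_nonneg.mpr (hd i))

theorem posSemidef_ofRat_smul_vecMulVec {c : ℚ} (hc : 0 ≤ c) (v : n → ℚ) :
    (ofRat (c • vecMulVec v v)).PosSemidef := by
  have h : ofRat (c • vecMulVec v v) =
      (c : ℂ) • vecMulVec (fun i => (v i : ℂ)) (star fun i => (v i : ℂ)) := by
    ext i j
    simp [ofRat_apply, vecMulVec_apply]
  rw [h]
  exact (posSemidef_vecMulVec_self_star _).smul (Complex.zero_le_real.mpr (Rat.cast_nonneg.mpr hc))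

theorem isDensity_cqOp_ofRat {α : Type} [Fintype α] [DecidableEq α] {W : α → Matrix n n ℚ}
    (hW : ∀ a, (ofRat (W a)).PosSemidef) (htr : ∑ a, (W a).trace = 1) :
    IsDensity (cqOp fun a => ofRat (W a)) := by
  refine ⟨posSemidef_cqOp hW, ?_⟩
  simp only [trace_cqOp, trace_ofRat]
  exact_mod_cast htr

end RationalMatrices

namespace RabinOT

def P0Block : Fin 2 → Matrix (Fin 3) (Fin 3) ℚ :=
  ![!![1, 0, 0; 0, 1, 0; 0, 0, 0], !![0, 0, 0; 0, 0, 0; 0, 0, 1]]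

def P1Block : Fin 2 → Matrix (Fin 3) (Fin 3) ℚ :=
  ![!![1/2, 0, 1/2; 0, 0, 0; 1/2, 0, 1/2], !![0, 0, 0; 0, 1/2, 1/2; 0, 1/2, 1/2]]

theorem P0r_eq_cqOp : P0r = cqOp fun a => ofRat (P0Block a) := by
  ext ⟨a, b⟩ ⟨c, d⟩
  fin_cases a <;> fin_cases c <;> fin_cases b <;> fin_cases d <;>
    simp [P0r, ket, cqOp_apply, ofRat_apply, P0Block]

theorem P1r_eq_cqOp : P1r = cqOp fun a => ofRat (P1Block a) := by
  have hsqrt : ((Real.sqrt 2 : ℝ) : ℂ)⁻¹ * ((Real.sqrt 2 : ℝ) : ℂ)⁻¹ = 1 / 2 := by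
    rw [← mul_inv, ← Complex.ofReal_mul, Real.mul_self_sqrt zero_le_two]
    norm_num
  ext ⟨a, b⟩ ⟨c, d⟩
  fin_cases a <;> fin_cases c <;> fin_cases b <;> fin_cases d <;>
    simp [P1r, ket, phi1, f23, cqOp_apply, ofRat_apply, P1Block, Fin.sum_univ_two,
      div_eq_mul_inv, hsqrt]

def dualA : Matrix (Fin 3) (Fin 3) ℚ :=
  !![530187/500000, 15091/250000, -2601/10000;
     15091/250000, 530187/500000, -2601/10000;
     -2601/10000, -2601/10000, 560369/500000]

def dualB : Matrix (Fin 3) (Fin 3) ℚ :=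
  !![608689/1000000, -128599/500000, 351481/1000000;
     -128599/500000, 608689/1000000, 351481/1000000;
     351481/1000000, 351481/1000000, 702973/1000000]

def dualSlack : Matrix (Fin 3) (Fin 3) ℚ :=
  !![197137/1000000, 98417/500000, -91381/1000000;
     98417/500000, 197137/1000000, -91381/1000000;
     -91381/1000000, -91381/1000000, 42489/1000000]

theorem posSemidef_dualA_sub (a : Fin 2) : (ofRat (dualA - P0Block a)).PosSemidef := by
  fin_cases a
  · exact posSemidef_ofRat_of_eq_ldl
      (L := !![1, 30182/30187, -130050/30187; 0, 1, -43350/20123; 0, 0, 1])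
      (d := ![30187/500000, 60369/3018700000, 970387/10061500000])
      (by decide +kernel) (by decide +kernel)
  · exact posSemidef_ofRat_of_eq_ldl
      (L := !![1, 30182/530187, -43350/176729; 0, 1, -130050/560369; 0, 0, 1])
      (d := ![530187/500000, 56037460369/53018700000, 2911161/280184500000])
      (by decide +kernel) (by decide +kernel)

theorem posSemidef_dualB_sub (a : Fin 2) : (ofRat (dualB - P1Block a)).PosSemidef := by
  fin_cases a
  · exact posSemidef_ofRat_of_eq_ldl
      (L := !![1, -257198/108689, -21217/15527; 0, 1, 3328647/6987517; 0, 0, 1])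
      (d := ![108689/1000000, 6987517/108689000000, 93435627/6987517000000])
      (by decide +kernel) (by decide +kernel)
  · exact posSemidef_ofRat_of_eq_ldl
      (L := !![1, -257198/608689, 351481/608689; 0, 1, -1671353/6987517; 0, 0, 1])
      (d := ![608689/1000000, 6987517/608689000000, 93435627/6987517000000])
      (by decide +kernel) (by decide +kernel)

theorem posSemidef_dualSlack : (ofRat dualSlack).PosSemidef :=
  posSemidef_ofRat_of_eq_ldl
    (L := !![1, 196834/197137, -91381/197137; 0, 1, -91381/393971; 0, 0, 1])
    (d := ![197137/1000000, 119373213/197137000000, 38459497/393971000000])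
    (by decide +kernel) (by decide +kernel)

theorem dualA_add_dualB_add_dualSlack :
    ofRat dualA + ofRat dualB + ofRat dualSlack = ((9331/5000 : ℝ) : ℂ) • 1 := by
  have h : dualA + dualB + dualSlack = (9331/5000 : ℚ) • 1 := by decide +kernel
  rw [← map_add, ← map_add, h]
  ext i j
  by_cases hij : i = j <;> simp [ofRat_apply, one_apply, hij]

theorem cheating_value_le {σ0 σ1 : Mat (Fin 2 × Fin 3)} (h0 : IsDensity σ0)
    (h1 : IsDensity σ1) (hpt : ptrA σ0 = ptrA σ1) :
    ((1/2 : ℂ) * hs σ0 P0r + (1/2 : ℂ) * hs σ1 P1r).re ≤ 0.9331 := by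
  rw [P0r_eq_cqOp, P1r_eq_cqOp]
  refine (value_le_of_dual_feasible (fun a => ?_) (fun a => ?_) posSemidef_dualSlack
    dualA_add_dualB_add_dualSlack h0 h1 hpt).trans (by norm_num)
  · rw [← map_sub]
    exact posSemidef_dualA_sub a
  · rw [← map_sub]
    exact posSemidef_dualB_sub a

def witnessVec0 : Fin 2 → Fin 3 → ℚ :=
  ![![197/500, -197/500, 0], ![183/1000, 183/1000, 789/1000]]

def witnessVec1 : Fin 2 → Fin 3 → ℚ :=
  ![![2342437/5741000, -856843/5741000, 3202551/5741000],
    ![-428133/2870500, 1171113/2870500, 160167/287050]]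

/-- Both families of vectors have total squared norm `0.999971`, hence the normalization. -/
def witnessBlock (v : Fin 2 → Fin 3 → ℚ) (a : Fin 2) : Matrix (Fin 3) (Fin 3) ℚ :=
  (1000000/999971 : ℚ) • vecMulVec (v a) (v a)

theorem isDensity_witness {v : Fin 2 → Fin 3 → ℚ} (hv : ∑ a, (witnessBlock v a).trace = 1) :
    IsDensity (cqOp fun a => ofRat (witnessBlock v a)) :=
  isDensity_cqOp_ofRat (fun a => posSemidef_ofRat_smul_vecMulVec (by norm_num) (v a)) hv

theorem exists_feasible_cheating_value_ge :
    ∃ σ0 σ1 : Mat (Fin 2 × Fin 3), IsDensity σ0 ∧ IsDensity σ1 ∧ ptrA σ0 = ptrA σ1 ∧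
      0.933 ≤ ((1/2 : ℂ) * hs σ0 P0r + (1/2 : ℂ) * hs σ1 P1r).re := by
  refine ⟨_, _, isDensity_witness (v := witnessVec0) (by decide +kernel),
    isDensity_witness (v := witnessVec1) (by decide +kernel), ?_, ?_⟩
  · have h : ∑ a, witnessBlock witnessVec0 a = ∑ a, witnessBlock witnessVec1 a := by
      decide +kernel
    rw [ptrA_cqOp, ptrA_cqOp, ← map_sum, ← map_sum, h]
  · have h : (933/1000 : ℚ) ≤ (∑ a, ((witnessBlock witnessVec0 a)ᵀ * P0Block a).trace
        + ∑ a, ((witnessBlock witnessVec1 a)ᵀ * P1Block a).trace) / 2 := by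
      decide +kernel
    rw [P0r_eq_cqOp, P1r_eq_cqOp, hs_cqOp, hs_cqOp]
    simp only [hs_ofRat, ← Rat.cast_sum]
    have hq := (Rat.cast_le (K := ℝ)).mpr h
    push_cast at hq
    simp only [Complex.add_re, Complex.mul_re, Complex.ratCast_re, Complex.ratCast_im]
    norm_num at hq ⊢
    linarith

end RabinOT

theorem rabin_ot_variant1_cheating_Alice :
    ∃ v : ℝ,
      IsLUB
        {x : ℝ | ∃ σ0 σ1 : Mat (Fin 2 × Fin 3),
          IsDensity σ0 ∧ IsDensity σ1 ∧ ptrA σ0 = ptrA σ1 ∧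
          x = ((1/2 : ℂ) * hs σ0 P0r + (1/2 : ℂ) * hs σ1 P1r).re}
        v
      ∧ (0.933 : ℝ) ≤ v ∧ v ≤ (0.9331 : ℝ) := by
  set S := {x : ℝ | ∃ σ0 σ1 : Mat (Fin 2 × Fin 3),
    IsDensity σ0 ∧ IsDensity σ1 ∧ ptrA σ0 = ptrA σ1 ∧
    x = ((1/2 : ℂ) * hs σ0 P0r + (1/2 : ℂ) * hs σ1 P1r).re}
  have hub : 0.9331 ∈ upperBounds S := by
    rintro x ⟨σ0, σ1, h0, h1, hpt, rfl⟩
    exact RabinOT.cheating_value_le h0 h1 hpt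
  obtain ⟨σ0, σ1, h0, h1, hpt, hge⟩ := RabinOT.exists_feasible_cheating_value_ge
  have hmem : _ ∈ S := ⟨σ0, σ1, h0, h1, hpt, rfl⟩
  exact ⟨sSup S, isLUB_csSup ⟨_, hmem⟩ ⟨_, hub⟩, hge.trans (le_csSup ⟨_, hub⟩ hmem),
    csSup_le ⟨_, hmem⟩ hub⟩

end
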